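/- There exist α ∈ (0, 1/2), K₀ > 0, ρ > 0 and M > 4 such that for all K ≥ K₀ and all n ∈ ℤ₊^d satisfying M ≤ ‖n‖ ≤ R·K and ‖n − n*‖ ≥ ρ·√K, one has 𝓛_K φ(n) ≤ −(α·β/2)·(‖n‖/K)·(‖n − n*‖²/K) · φ(n). -/

import Mathlib

open scoped BigOperators RealInnerProductSpace

noncomputable section

namespace MultitypeBD

variable {d : ℕ}

/-- The real vector associated to a lattice point. -/
def toVec (n : Fin d → ℤ) : EuclideanSpace ℝ (Fin d) := WithLp.toLp 2 (fun i => (n i : ℝ))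

/-- The lattice point `n* = ⌊K·x*⌋` (componentwise floor). -/
def nstar (K : ℝ) (xstar : EuclideanSpace ℝ (Fin d)) : Fin d → ℤ := fun i => ⌊K * xstar i⌋

/-- The Lyapunov function `φ(n) = exp((α/K)·‖n − n*‖²)`. -/
def lyap (α K : ℝ) (xstar : EuclideanSpace ℝ (Fin d)) (n : Fin d → ℤ) : ℝ :=
  Real.exp ((α / K) * ‖toVec n - toVec (nstar K xstar)‖ ^ 2)

/-- The generator
`𝓛_K f(n) = K·Σ_j [B_j(n/K)(f(n+e_j) − f(n)) + D_j(n/K)(f(n−e_j) − f(n))]`. -/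
def gen (K : ℝ) (B D : EuclideanSpace ℝ (Fin d) → EuclideanSpace ℝ (Fin d))
    (f : (Fin d → ℤ) → ℝ) (n : Fin d → ℤ) : ℝ :=
  K * ∑ j : Fin d,
    (B (WithLp.toLp 2 (fun i => (n i : ℝ) / K)) j * (f (Function.update n j (n j + 1)) - f n)
      + D (WithLp.toLp 2 (fun i => (n i : ℝ) / K)) j * (f (Function.update n j (n j - 1)) - f n))

end MultitypeBD

open MultitypeBD

/-!
Write `x = n/K` and `u = n − n*`. A step `±e_j` multiplies `φ` by `exp t^±_j` with
`t^±_j = (α/K)(1 ± 2u_j)`, so `𝓛_K φ(n) = K φ(n) Σ_j [B_j(x)(e^{t⁺_j} − 1) + D_j(x)(e^{t⁻_j} − 1)]`,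
and `|t^±_j| ≤ 1` once `α` is small. By `e^t ≤ 1 + t + t²` the first-order part is
`(α/K)(2⟪B(x) − D(x), u⟫ + Σ_j (B_j + D_j)(x))`.
Since `u = K(x − x*) + w` with rounding error `‖w‖ ≤ √d`, the drift condition gives
`⟪B − D, u⟫ ≤ −βK‖x‖‖x − x*‖² + O(‖x‖)`, and `K‖x − x*‖` is comparable to `‖u‖` once `‖u‖ ≫ √d`.
As `B`, `D` are locally Lipschitz and vanish at `0`, they grow at most linearly on bounded sets, so
the second-order part is `O(α²‖x‖‖u‖²)`, absorbed by taking `α` small, and the remaining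
`O(αK‖x‖)` terms are absorbed by `‖u‖² ≥ ρ²K` with `ρ` large. The drift condition, assumed for
`‖x‖ < R`, extends to `‖x‖ = R` by continuity along the ray through `x`.
-/

open Real Finset Filter Topology

lemma Real.exp_le_one_add_add_sq {t : ℝ} (ht : |t| ≤ 1) : exp t ≤ 1 + t + t ^ 2 := by
  linarith [(abs_le.1 (abs_exp_sub_one_sub_id_le ht)).2]

lemma LocallyLipschitzOn.exists_norm_le_mul_norm {E F : Type*} [NormedAddCommGroup E]
    [ProperSpace E] [SeminormedAddCommGroup F] {S : Set E} {f : E → F} (hS : IsClosed S)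
    (hf : LocallyLipschitzOn S f) (h0 : 0 ∈ S) (hf0 : f 0 = 0) {R : ℝ} (hR : 0 ≤ R) :
    ∃ L : ℝ, 0 < L ∧ ∀ x ∈ S, ‖x‖ ≤ R → ‖f x‖ ≤ L * ‖x‖ := by
  obtain ⟨L, hL⟩ := (hf.mono Set.inter_subset_left).exists_lipschitzOnWith_of_compact
    ((isCompact_closedBall (0 : E) R).inter_left hS)
  refine ⟨L + 1, by positivity, fun x hx hxR => ?_⟩
  have hfx := hL.dist_le_mul x ⟨hx, by simpa using hxR⟩ 0 ⟨h0, by simpa using hR⟩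
  rw [hf0, dist_zero_right, dist_zero_right] at hfx
  nlinarith [norm_nonneg x]

lemma StarConvex.le_of_forall_norm_lt {E : Type*} [NormedAddCommGroup E] [NormedSpace ℝ E]
    {S : Set E} (hS : StarConvex ℝ 0 S) {f g : E → ℝ} {R : ℝ} (hR : 0 < R)
    (h : ∀ y ∈ S, ‖y‖ < R → f y ≤ g y) {x : E} (hx : x ∈ S) (hxR : ‖x‖ ≤ R)
    (hf : ContinuousWithinAt f S x) (hg : ContinuousWithinAt g S x) : f x ≤ g x := by
  have hIoo : Set.Ioo (0 : ℝ) 1 ∈ 𝓝[<] 1 := Ioo_mem_nhdsLT one_pos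
  have hsmul : Tendsto (fun t : ℝ => t • x) (𝓝[<] 1) (𝓝[S] x) := by
    refine tendsto_nhdsWithin_iff.2 ⟨?_, ?_⟩
    · have : Tendsto (fun t : ℝ => t • x) (𝓝 1) (𝓝 ((1 : ℝ) • x)) :=
        (continuous_id.smul continuous_const).tendsto 1
      simpa using this.mono_left nhdsWithin_le_nhds
    · filter_upwards [hIoo] with t ht using hS.smul_mem hx ht.1.le ht.2.le
  refine le_of_tendsto_of_tendsto (hf.tendsto.comp hsmul) (hg.tendsto.comp hsmul) ?_
  filter_upwards [hIoo] with t ht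
  refine h _ (hS.smul_mem hx ht.1.le ht.2.le) ?_
  rw [norm_smul, norm_of_nonneg ht.1.le]
  nlinarith [norm_nonneg x, ht.1, ht.2]

lemma EuclideanSpace.norm_sub_floor_le {ι : Type*} [Fintype ι] (v : EuclideanSpace ℝ ι) :
    ‖v - WithLp.toLp 2 (fun i => (⌊v i⌋ : ℝ))‖ ≤ √(Fintype.card ι) := by
  refine Real.le_sqrt_of_sq_le ?_
  rw [EuclideanSpace.real_norm_sq_eq]
  calc ∑ i, (v - WithLp.toLp 2 (fun i => (⌊v i⌋ : ℝ))) i ^ 2 ≤ ∑ _i : ι, (1 : ℝ) := by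
        refine sum_le_sum fun i _ => ?_
        simp only [PiLp.sub_apply, Int.self_sub_floor]
        nlinarith [Int.fract_nonneg (v i), Int.fract_lt_one (v i)]
    _ = Fintype.card ι := by simp

lemma exists_pos_lt_half_mul_le {a b c : ℝ} (ha : 0 < a) (hb : 0 < b) (hc : 0 < c) :
    ∃ α : ℝ, 0 < α ∧ α < 1 / 2 ∧ α * a ≤ b ∧ α * c ≤ 1 :=
  ⟨min (1 / 4) (min (b / a) (1 / c)), by positivity, (min_le_left _ _).trans_lt (by norm_num),
    (le_div_iff₀ ha).1 ((min_le_right _ _).trans (min_le_left _ _)),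
    (le_div_iff₀ hc).1 ((min_le_right _ _).trans (min_le_right _ _))⟩

lemma sq_norm_le_two_mul_sq_norm_sub {E : Type*} [SeminormedAddCommGroup E] {u w : E}
    (h : 4 * ‖w‖ ≤ ‖u‖) : ‖u‖ ^ 2 ≤ 2 * ‖u - w‖ ^ 2 := by
  have := norm_sub_norm_le u w
  nlinarith [norm_nonneg w]

lemma EuclideanSpace.isClosed_setOf_forall_nonneg {ι : Type*} [Fintype ι] :
    IsClosed {x : EuclideanSpace ℝ ι | ∀ i, 0 ≤ x i} := by
  simp only [Set.ofPred_forall]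
  exact isClosed_iInter fun i => isClosed_le continuous_const (EuclideanSpace.proj i).continuous

lemma EuclideanSpace.starConvex_setOf_forall_nonneg {ι : Type*} :
    StarConvex ℝ 0 {x : EuclideanSpace ℝ ι | ∀ i, 0 ≤ x i} :=
  fun y hy a b _ hb _ i => by simpa using mul_nonneg hb (hy i)

lemma EuclideanSpace.sum_apply_le_card_mul_norm {ι : Type*} [Fintype ι]
    (v : EuclideanSpace ℝ ι) : ∑ j, v j ≤ Fintype.card ι * ‖v‖ :=
  calc ∑ j, v j ≤ ∑ _j : ι, ‖v‖ :=
        sum_le_sum fun j _ => (le_abs_self _).trans (by simpa using PiLp.norm_apply_le v j)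
    _ = Fintype.card ι * ‖v‖ := by simp

namespace MultitypeBD

section

variable {ι : Type*} [Fintype ι]

def expDrift (c : ℝ) (b e u : EuclideanSpace ℝ ι) : ℝ :=
  ∑ j, (b j * (exp (c * (2 * u j + 1)) - 1) + e j * (exp (c * (1 - 2 * u j)) - 1))

lemma expDrift_le {c : ℝ} {b e u : EuclideanSpace ℝ ι} (hc : 0 ≤ c) (hb : ∀ j, 0 ≤ b j)
    (he : ∀ j, 0 ≤ e j) (hcu : c * (2 * ‖u‖ + 1) ≤ 1) :
    expDrift c b e u ≤ c * (2 * ⟪b - e, u⟫ + ∑ j, (b j + e j)) +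
      (c * (2 * ‖u‖ + 1)) ^ 2 * ∑ j, (b j + e j) := by
  set τ := c * (2 * ‖u‖ + 1)
  have hterm : ∀ {a t : ℝ}, 0 ≤ a → |t| ≤ τ → a * (exp t - 1) ≤ a * t + τ ^ 2 * a := by
    intro a t ha ht
    have hexp := exp_le_one_add_add_sq (ht.trans hcu)
    have hsq : t ^ 2 ≤ τ ^ 2 := sq_le_sq' (abs_le.1 ht).1 (abs_le.1 ht).2
    nlinarith
  have hcoord : ∀ j, |c * (2 * u j + 1)| ≤ τ ∧ |c * (1 - 2 * u j)| ≤ τ := by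
    intro j
    have hu := abs_le.1 (by simpa using PiLp.norm_apply_le u j : |u j| ≤ ‖u‖)
    simp only [abs_mul, abs_of_nonneg hc, τ]
    constructor <;> refine mul_le_mul_of_nonneg_left (abs_le.2 ⟨?_, ?_⟩) hc <;> linarith
  calc expDrift c b e u
      ≤ ∑ j, (b j * (c * (2 * u j + 1)) + τ ^ 2 * b j
          + (e j * (c * (1 - 2 * u j)) + τ ^ 2 * e j)) :=
        sum_le_sum fun j _ => add_le_add (hterm (hb j) (hcoord j).1) (hterm (he j) (hcoord j).2)
    _ = c * (2 * ⟪b - e, u⟫ + ∑ j, (b j + e j)) + τ ^ 2 * ∑ j, (b j + e j) := by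
        simp only [PiLp.inner_apply, PiLp.sub_apply, Real.inner_apply, mul_sum, ← sum_add_distrib]
        exact sum_congr rfl fun j _ => by ring

lemma sq_mul_expDrift_div_le {α K : ℝ} {b e u : EuclideanSpace ℝ ι} (hK : 0 < K) (hα : 0 ≤ α)
    (hb : ∀ j, 0 ≤ b j) (he : ∀ j, 0 ≤ e j) (hαu : α * (2 * ‖u‖ + 1) ≤ K) :
    K ^ 2 * expDrift (α / K) b e u ≤
      α * K * (2 * ⟪b - e, u⟫ + ∑ j, (b j + e j))
        + α ^ 2 * (8 * ‖u‖ ^ 2 + 2) * ∑ j, (b j + e j) := by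
  have hσ : 0 ≤ ∑ j, (b j + e j) := sum_nonneg fun j _ => add_nonneg (hb j) (he j)
  have hE := expDrift_le (div_nonneg hα hK.le) hb he (by rwa [div_mul_eq_mul_div, div_le_one hK])
  have hquad : (2 * ‖u‖ + 1) ^ 2 ≤ 8 * ‖u‖ ^ 2 + 2 := by nlinarith [sq_nonneg (2 * ‖u‖ - 1)]
  calc K ^ 2 * expDrift (α / K) b e u
      ≤ K ^ 2 * (α / K * (2 * ⟪b - e, u⟫ + ∑ j, (b j + e j))
          + (α / K * (2 * ‖u‖ + 1)) ^ 2 * ∑ j, (b j + e j)) :=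
        mul_le_mul_of_nonneg_left hE (sq_nonneg K)
    _ = α * K * (2 * ⟪b - e, u⟫ + ∑ j, (b j + e j))
          + α ^ 2 * (2 * ‖u‖ + 1) ^ 2 * ∑ j, (b j + e j) := by
        field_simp
    _ ≤ _ := by gcongr

lemma two_mul_inner_sub_le {b e x xstar w u : EuclideanSpace ℝ ι} {β K L s : ℝ}
    (hbL : ‖b‖ ≤ L * ‖x‖) (heL : ‖e‖ ≤ L * ‖x‖)
    (hdrift : ⟪b - e, x - xstar⟫ ≤ -β * ‖x‖ * ‖x - xstar‖ ^ 2) (hw : ‖w‖ ≤ s)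
    (hu : u = K • (x - xstar) + w) (hK : 0 < K) (hβ : 0 ≤ β) (hsu : 4 * s ≤ ‖u‖) :
    2 * K * ⟪b - e, u⟫ ≤ -β * ‖x‖ * ‖u‖ ^ 2 + 4 * K * L * ‖x‖ * s := by
  have hbe : ‖b - e‖ ≤ 2 * L * ‖x‖ := (norm_sub_le b e).trans (by linarith)
  have hw' := (real_inner_le_norm (b - e) w).trans
    (mul_le_mul hbe hw (norm_nonneg w) ((norm_nonneg _).trans hbe))
  have hux : ‖u‖ ^ 2 ≤ 2 * K ^ 2 * ‖x - xstar‖ ^ 2 := by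
    have := sq_norm_le_two_mul_sq_norm_sub (hsu.trans' (by linarith [hw]) : 4 * ‖w‖ ≤ ‖u‖)
    rwa [show u - w = K • (x - xstar) by rw [hu]; abel, norm_smul, mul_pow, norm_of_nonneg hK.le,
      ← mul_assoc] at this
  have hsplit : ⟪b - e, u⟫ = K * ⟪b - e, x - xstar⟫ + ⟪b - e, w⟫ := by
    rw [hu, inner_add_right, real_inner_smul_right]
  have h1 := mul_le_mul_of_nonneg_left hdrift (by positivity : 0 ≤ 2 * K ^ 2)
  have h2 := mul_le_mul_of_nonneg_left hw' (by positivity : 0 ≤ 2 * K)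
  have h3 := mul_le_mul_of_nonneg_left hux (mul_nonneg hβ (norm_nonneg x))
  rw [hsplit]
  linarith

lemma sq_mul_expDrift_le {b e x xstar w u : EuclideanSpace ℝ ι} {α β K L R s ρ : ℝ}
    (hb : ∀ j, 0 ≤ b j) (he : ∀ j, 0 ≤ e j) (hbL : ‖b‖ ≤ L * ‖x‖) (heL : ‖e‖ ≤ L * ‖x‖)
    (hdrift : ⟪b - e, x - xstar⟫ ≤ -β * ‖x‖ * ‖x - xstar‖ ^ 2)
    (hxR : ‖x‖ ≤ R) (hxstarR : ‖xstar‖ ≤ R) (hw : ‖w‖ ≤ s) (hu : u = K • (x - xstar) + w)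
    (hK : 1 ≤ K) (hα : 0 < α) (hβ : 0 ≤ β) (hαβ : α * (64 * Fintype.card ι * L) ≤ β)
    (hαR : α * (4 * R + 2 * s + 1) ≤ 1) (hρ : 4 * (4 * L * s + 6 * Fintype.card ι * L) ≤ β * ρ ^ 2)
    (hsu : 4 * s ≤ ‖u‖) (hρu : ρ ^ 2 * K ≤ ‖u‖ ^ 2) :
    K ^ 2 * expDrift (α / K) b e u ≤ -(α * β / 2) * ‖x‖ * ‖u‖ ^ 2 := by
  set X := ‖x‖
  set N := ‖u‖ ^ 2
  set σ := ∑ j, (b j + e j)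
  set m : ℝ := (Fintype.card ι : ℝ)
  have hK0 : 0 < K := one_pos.trans_le hK
  have hs : 0 ≤ s := (norm_nonneg w).trans hw
  have hLX : 0 ≤ L * X := (norm_nonneg b).trans hbL
  have hσ : σ ≤ 2 * m * L * X := by
    have := mul_le_mul_of_nonneg_left (add_le_add hbL heL) (Nat.cast_nonneg (Fintype.card ι))
    have hsplit : σ = ∑ j, b j + ∑ j, e j := sum_add_distrib
    linarith [EuclideanSpace.sum_apply_le_card_mul_norm b,
      EuclideanSpace.sum_apply_le_card_mul_norm e]
  have hu_le : ‖u‖ ≤ (2 * R + s) * K := by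
    have h1 := mul_le_mul_of_nonneg_left (add_le_add hxR hxstarR) hK0.le
    have h2 := mul_le_mul_of_nonneg_left hK hs
    calc ‖u‖ ≤ K * (X + ‖xstar‖) + s := by
          grw [hu, norm_add_le, norm_smul, norm_of_nonneg hK0.le, norm_sub_le, hw]
      _ ≤ (2 * R + s) * K := by linarith
  have hK2E := sq_mul_expDrift_div_le hK0 hα.le hb he (by
    have := mul_le_mul_of_nonneg_left hu_le hα.le
    nlinarith)
  have hα1 : α ≤ K := by nlinarith [(norm_nonneg xstar).trans hxstarR]
  have e1 := mul_le_mul_of_nonneg_left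
    (two_mul_inner_sub_le hbL heL hdrift hw hu hK0 hβ hsu) hα.le
  have e2 : α ^ 2 * (8 * N + 2) * σ ≤ (α * β / 4) * X * N + 4 * α * K * m * L * X := by
    have h1 := mul_le_mul_of_nonneg_left hσ (by positivity : 0 ≤ α ^ 2 * (8 * N + 2))
    have h2 := mul_le_mul_of_nonneg_left hαβ (by positivity : 0 ≤ α / 4 * X * N)
    have h3 := mul_le_mul_of_nonneg_left hα1 (by positivity : 0 ≤ 4 * α * m * (L * X))
    linarith
  have e3 : α * K * X * (4 * L * s + 6 * m * L) ≤ (α * β / 4) * X * N := by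
    have h1 := mul_le_mul_of_nonneg_left hρ (by positivity : 0 ≤ α * K * X)
    have h2 := mul_le_mul_of_nonneg_left hρu (by positivity : 0 ≤ α * β * X)
    linarith
  have e4 := mul_le_mul_of_nonneg_left hσ (by positivity : 0 ≤ α * K)
  linarith

end

variable {d : ℕ}

def rescale (K : ℝ) (n : Fin d → ℤ) : EuclideanSpace ℝ (Fin d) :=
  WithLp.toLp 2 (fun i => (n i : ℝ) / K)

lemma smul_rescale {K : ℝ} (hK : K ≠ 0) (n : Fin d → ℤ) : K • rescale K n = toVec n := by
  ext i
  simp [rescale, toVec, mul_div_cancel₀ _ hK]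

lemma toVec_update_add (n : Fin d → ℤ) (j : Fin d) (s : ℤ) :
    toVec (Function.update n j (n j + s)) = toVec n + EuclideanSpace.single j (s : ℝ) := by
  ext i
  rcases eq_or_ne i j with rfl | hij <;> simp [toVec, Function.update_apply, *]

lemma lyap_update_add (α K : ℝ) (xstar : EuclideanSpace ℝ (Fin d)) (n : Fin d → ℤ) (j : Fin d)
    (s : ℤ) : lyap α K xstar (Function.update n j (n j + s)) =
      lyap α K xstar n * exp (α / K * (2 * s * (toVec n - toVec (nstar K xstar)) j + s ^ 2)) := by
  rw [lyap, lyap, ← exp_add, toVec_update_add, add_sub_right_comm, norm_add_sq_real,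
    EuclideanSpace.inner_single_right, PiLp.norm_single]
  simp only [conj_trivial, Real.norm_eq_abs, sq_abs]
  ring_nf

lemma gen_lyap_eq (α K : ℝ) (B D : EuclideanSpace ℝ (Fin d) → EuclideanSpace ℝ (Fin d))
    (xstar : EuclideanSpace ℝ (Fin d)) (n : Fin d → ℤ) :
    gen K B D (lyap α K xstar) n = K * lyap α K xstar n *
      expDrift (α / K) (B (rescale K n)) (D (rescale K n)) (toVec n - toVec (nstar K xstar)) := by
  set u := toVec n - toVec (nstar K xstar)
  have hup : ∀ j, lyap α K xstar (Function.update n j (n j + 1)) =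
      lyap α K xstar n * exp (α / K * (2 * u j + 1)) := fun j => by
    rw [lyap_update_add]; congr 3; push_cast; ring
  have hdown : ∀ j, lyap α K xstar (Function.update n j (n j - 1)) =
      lyap α K xstar n * exp (α / K * (1 - 2 * u j)) := fun j => by
    rw [sub_eq_add_neg, lyap_update_add]; congr 3; push_cast; ring
  simp only [gen, expDrift, hup, hdown, mul_sum, rescale]
  exact sum_congr rfl fun j _ => by ring

lemma toVec_sub_nstar_eq {K : ℝ} (hK : K ≠ 0) (xstar : EuclideanSpace ℝ (Fin d))
    (n : Fin d → ℤ) : toVec n - toVec (nstar K xstar) =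
      K • (rescale K n - xstar) + (K • xstar - toVec (nstar K xstar)) := by
  rw [smul_sub, smul_rescale hK]
  abel

lemma norm_smul_sub_toVec_nstar_le (K : ℝ) (xstar : EuclideanSpace ℝ (Fin d)) :
    ‖K • xstar - toVec (nstar K xstar)‖ ≤ √d := by
  simpa [toVec, nstar] using EuclideanSpace.norm_sub_floor_le (K • xstar)

lemma gen_lyap_le {B D : EuclideanSpace ℝ (Fin d) → EuclideanSpace ℝ (Fin d)}
    {xstar : EuclideanSpace ℝ (Fin d)} {α β K L R ρ : ℝ}
    (hBnonneg : ∀ x : EuclideanSpace ℝ (Fin d), (∀ i, 0 ≤ x i) → ∀ j, 0 ≤ B x j)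
    (hDnonneg : ∀ x : EuclideanSpace ℝ (Fin d), (∀ i, 0 ≤ x i) → ∀ j, 0 ≤ D x j)
    (hBL : ∀ x : EuclideanSpace ℝ (Fin d), (∀ i, 0 ≤ x i) → ‖x‖ ≤ R → ‖B x‖ ≤ L * ‖x‖)
    (hDL : ∀ x : EuclideanSpace ℝ (Fin d), (∀ i, 0 ≤ x i) → ‖x‖ ≤ R → ‖D x‖ ≤ L * ‖x‖)
    (hdrift : ∀ x : EuclideanSpace ℝ (Fin d), (∀ i, 0 ≤ x i) → ‖x‖ ≤ R →
      ⟪B x - D x, x - xstar⟫ ≤ -β * ‖x‖ * ‖x - xstar‖ ^ 2)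
    (hR : ‖xstar‖ ≤ R) (hK : 1 ≤ K) (hα : 0 < α) (hβ : 0 ≤ β) (hαβ : α * (64 * d * L) ≤ β)
    (hαR : α * (4 * R + 2 * √d + 1) ≤ 1) (hρ : 4 * (4 * L * √d + 6 * d * L) ≤ β * ρ ^ 2)
    (hdρ : 4 * √d ≤ ρ * √K) {n : Fin d → ℤ} (hn : ∀ i, 0 ≤ n i) (hnR : ‖toVec n‖ ≤ R * K)
    (hρn : ρ * √K ≤ ‖toVec n - toVec (nstar K xstar)‖) :
    gen K B D (lyap α K xstar) n ≤
      -(α * β / 2) * (‖toVec n‖ / K) * (‖toVec n - toVec (nstar K xstar)‖ ^ 2 / K)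
        * lyap α K xstar n := by
  have hK0 : 0 < K := one_pos.trans_le hK
  rw [gen_lyap_eq]
  set u := toVec n - toVec (nstar K xstar)
  set x := rescale K n
  have hx : ∀ i, 0 ≤ x i := fun i => div_nonneg (Int.cast_nonneg (hn i)) hK0.le
  have hnx : ‖toVec n‖ = K * ‖x‖ := by
    rw [← smul_rescale hK0.ne' n, norm_smul, norm_of_nonneg hK0.le]
  have hxR : ‖x‖ ≤ R := le_of_mul_le_mul_left (by linarith) hK0
  have hu2 : ρ ^ 2 * K ≤ ‖u‖ ^ 2 := by
    have hρK : 0 ≤ ρ * √K := (by positivity : (0 : ℝ) ≤ 4 * √d).trans hdρ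
    simpa [mul_pow, sq_sqrt hK0.le] using pow_le_pow_left₀ hρK hρn 2
  have key : K ^ 2 * expDrift (α / K) (B x) (D x) u ≤ -(α * β / 2) * ‖x‖ * ‖u‖ ^ 2 :=
    sq_mul_expDrift_le (hBnonneg x hx) (hDnonneg x hx) (hBL x hx hxR) (hDL x hx hxR)
      (hdrift x hx hxR) hxR hR (norm_smul_sub_toVec_nstar_le K xstar)
      (toVec_sub_nstar_eq hK0.ne' xstar n) hK hα hβ (by simpa using hαβ) hαR (by simpa using hρ)
      (hdρ.trans hρn) hu2
  have hKE : K * expDrift (α / K) (B x) (D x) u ≤ -(α * β / 2) * ‖x‖ * (‖u‖ ^ 2 / K) := by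
    rw [mul_div_assoc', le_div_iff₀ hK0]
    linarith
  rw [hnx, mul_div_cancel_left₀ _ hK0.ne']
  calc K * lyap α K xstar n * expDrift (α / K) (B x) (D x) u
      = lyap α K xstar n * (K * expDrift (α / K) (B x) (D x) u) := by ring
    _ ≤ lyap α K xstar n * (-(α * β / 2) * ‖x‖ * (‖u‖ ^ 2 / K)) :=
      mul_le_mul_of_nonneg_left hKE (exp_pos _).le
    _ = _ := by ring

end MultitypeBD

theorem lyapunov_generator_strict_decrease_general (d : ℕ) (hd : 1 ≤ d)
    (B D : EuclideanSpace ℝ (Fin d) → EuclideanSpace ℝ (Fin d))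
    (hBnonneg : ∀ x : EuclideanSpace ℝ (Fin d), (∀ i, 0 ≤ x i) → ∀ j, 0 ≤ B x j)
    (hDnonneg : ∀ x : EuclideanSpace ℝ (Fin d), (∀ i, 0 ≤ x i) → ∀ j, 0 ≤ D x j)
    (hBlip : LocallyLipschitzOn {x : EuclideanSpace ℝ (Fin d) | ∀ i, 0 ≤ x i} B)
    (hDlip : LocallyLipschitzOn {x : EuclideanSpace ℝ (Fin d) | ∀ i, 0 ≤ x i} D)
    (hB0 : B 0 = 0) (hD0 : D 0 = 0)
    (xstar : EuclideanSpace ℝ (Fin d))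
    (β R : ℝ) (hβ : 0 < β) (hR : ‖xstar‖ < R)
    (hlyapcond : ∀ x : EuclideanSpace ℝ (Fin d), (∀ i, 0 ≤ x i) → ‖x‖ < R →
      ⟪B x - D x, x - xstar⟫ ≤ -β * ‖x‖ * ‖x - xstar‖ ^ 2) :
    ∃ α K₀ ρ M : ℝ, 0 < α ∧ α < 1 / 2 ∧ 0 < K₀ ∧ 0 < ρ ∧ 4 < M ∧
      ∀ K : ℝ, K₀ ≤ K → ∀ n : Fin d → ℤ, (∀ i, 0 ≤ n i) →
        M ≤ ‖toVec n‖ → ‖toVec n‖ ≤ R * K →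
        ρ * Real.sqrt K ≤ ‖toVec n - toVec (nstar K xstar)‖ →
        gen K B D (lyap α K xstar) n ≤
          -(α * β / 2) * (‖toVec n‖ / K) * (‖toVec n - toVec (nstar K xstar)‖ ^ 2 / K)
            * lyap α K xstar n := by
  have hR0 : 0 < R := (norm_nonneg xstar).trans_lt hR
  have hS := EuclideanSpace.starConvex_setOf_forall_nonneg (ι := Fin d)
  have hSc := EuclideanSpace.isClosed_setOf_forall_nonneg (ι := Fin d)
  obtain ⟨LB, hLB, hBL⟩ := hBlip.exists_norm_le_mul_norm hSc (fun _ => le_rfl) hB0 hR0.le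
  obtain ⟨LD, hLD, hDL⟩ := hDlip.exists_norm_le_mul_norm hSc (fun _ => le_rfl) hD0 hR0.le
  set L := max LB LD
  have hdrift : ∀ x ∈ {x : EuclideanSpace ℝ (Fin d) | ∀ i, 0 ≤ x i}, ‖x‖ ≤ R →
      ⟪B x - D x, x - xstar⟫ ≤ -β * ‖x‖ * ‖x - xstar‖ ^ 2 := fun x hx hxR =>
    hS.le_of_forall_norm_lt hR0 hlyapcond hx hxR
      ((hBlip.continuousOn.sub hDlip.continuousOn).inner (continuousOn_id.sub continuousOn_const)
        x hx) (by fun_prop : Continuous fun y => -β * ‖y‖ * ‖y - xstar‖ ^ 2).continuousWithinAt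
  set s := √(d : ℝ)
  obtain ⟨α, hα0, hα, hαβ, hαR⟩ := exists_pos_lt_half_mul_le (a := 64 * d * L)
    (c := 4 * R + 2 * s + 1) (by positivity) hβ (by positivity)
  set ρ := √(4 * (4 * L * s + 6 * d * L) / β)
  have hρ : 4 * (4 * L * s + 6 * d * L) ≤ β * ρ ^ 2 := by
    rw [sq_sqrt (by positivity), mul_div_cancel₀ _ hβ.ne']
  refine ⟨α, max 1 ((4 * s / ρ) ^ 2), ρ, 5, hα0, hα, by positivity, by positivity, by norm_num,
    fun K hK n hn _ hnR hρn => ?_⟩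
  have hsK : 4 * s ≤ ρ * √K := by
    rw [← div_le_iff₀' (by positivity)]
    exact le_sqrt_of_sq_le (le_of_max_le_right hK)
  exact gen_lyap_le hBnonneg hDnonneg
    (fun x hx hxR => (hBL x hx hxR).trans (by gcongr; exact le_max_left _ _))
    (fun x hx hxR => (hDL x hx hxR).trans (by gcongr; exact le_max_right _ _))
    hdrift hR.le (le_of_max_le_left hK) hα0 hβ.le hαβ hαR hρ hsK hn hnR hρn

/-- Corollary on strict decrease of the Lyapunov function: there exist
`α ∈ (0,1/2)`, `K₀ > 0`, `ρ > 0` and `M > 4` such that for all `K ≥ K₀` and all `n ∈ ℤ₊^d`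
with `M ≤ ‖n‖ ≤ R·K` and `‖n − n*‖ ≥ ρ·√K`, one has
`𝓛_K φ(n) ≤ −(α·β/2)·(‖n‖/K)·(‖n − n*‖²/K)·φ(n)`. -/
theorem lyapunov_generator_strict_decrease (d : ℕ) (hd : 1 ≤ d)
    (B D : EuclideanSpace ℝ (Fin d) → EuclideanSpace ℝ (Fin d))
    (hBnonneg : ∀ x : EuclideanSpace ℝ (Fin d), (∀ i, 0 ≤ x i) → ∀ j, 0 ≤ B x j)
    (hDnonneg : ∀ x : EuclideanSpace ℝ (Fin d), (∀ i, 0 ≤ x i) → ∀ j, 0 ≤ D x j)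
    (hBlip : LocallyLipschitzOn {x : EuclideanSpace ℝ (Fin d) | ∀ i, 0 ≤ x i} B)
    (hDlip : LocallyLipschitzOn {x : EuclideanSpace ℝ (Fin d) | ∀ i, 0 ≤ x i} D)
    (hB0 : B 0 = 0) (hD0 : D 0 = 0)
    (xstar : EuclideanSpace ℝ (Fin d)) (hxstar : ∀ i, 0 < xstar i)
    (hfix : B xstar = D xstar)
    (β R : ℝ) (hβ : 0 < β) (hR : ‖xstar‖ < R)
    (hlyapcond : ∀ x : EuclideanSpace ℝ (Fin d), (∀ i, 0 ≤ x i) → ‖x‖ < R →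
      ⟪B x - D x, x - xstar⟫ ≤ -β * ‖x‖ * ‖x - xstar‖ ^ 2) :
    ∃ α K₀ ρ M : ℝ, 0 < α ∧ α < 1 / 2 ∧ 0 < K₀ ∧ 0 < ρ ∧ 4 < M ∧
      ∀ K : ℝ, K₀ ≤ K → ∀ n : Fin d → ℤ, (∀ i, 0 ≤ n i) →
        M ≤ ‖toVec n‖ → ‖toVec n‖ ≤ R * K →
        ρ * Real.sqrt K ≤ ‖toVec n - toVec (nstar K xstar)‖ →
        gen K B D (lyap α K xstar) n ≤
          -(α * β / 2) * (‖toVec n‖ / K) * (‖toVec n - toVec (nstar K xstar)‖ ^ 2 / K)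
            * lyap α K xstar n :=
  lyapunov_generator_strict_decrease_general d hd B D hBnonneg hDnonneg hBlip hDlip hB0 hD0 xstar β
    R hβ hR hlyapcond
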